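/- arXiv:1211.3173 — 2 statements merged into one kernel-verified Lean document; each statement's English description precedes it below -/
import Mathlib

section
/- Let Γ be an infinite set, X a Banach space, and T : c₀(Γ) → X a bounded linear operator such that the set {γ ∈ Γ : ‖T(e_γ)‖ > ε} has cardinality |Γ| for some ε > 0 (where e_γ are the unit vectors). Then there is Γ' ⊆ Γ with |Γ'| = |Γ| such that T restricted to c₀(Γ') is an isomorphism onto its image. -/
open Filter Set
open scoped ZeroAtInfty

noncomputable section

abbrev LinfSeq : Type := lp (fun _ : ℕ => ℝ) ⊤

def c0Null : Submodule ℝ LinfSeq where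
  carrier := {x | Tendsto (fun n => x n) atTop (nhds (0 : ℝ))}
  add_mem' := by
    intro x y hx hy
    simpa [lp.coeFn_add] using hx.add hy
  zero_mem' := by
    simpa [lp.coeFn_zero] using (tendsto_const_nhds : Tendsto (fun _ : ℕ => (0:ℝ)) atTop (nhds 0))
  smul_mem' := by
    intro c x hx
    have h := hx.const_mul c
    simpa [lp.coeFn_smul, smul_eq_mul] using h

abbrev LinfModC0 : Type := LinfSeq ⧸ c0Null

/-- `y ∈ ℓ∞/c₀` is constantly `r` on the clopen set `[E]*` of `ℕ*`. -/
def ConstOnStar (E : Set ℕ) (r : ℝ) (y : LinfModC0) : Prop :=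
  ∃ x : LinfSeq, Submodule.Quotient.mk x = y ∧
    Tendsto (fun n => x n) (atTop ⊓ 𝓟 E) (nhds r)

section c0
variable (Γ : Type) [TopologicalSpace Γ] [DiscreteTopology Γ]

def c0Ind (s : Set Γ) (hs : s.Finite) : C₀(Γ, ℝ) where
  toFun := s.indicator 1
  continuous_toFun := continuous_of_discreteTopology
  zero_at_infty' := by
    have h : ∀ᶠ γ in cocompact Γ, γ ∉ s := by
      rw [cocompact_eq_cofinite]; exact Set.Finite.eventually_cofinite_notMem hs
    exact tendsto_const_nhds.congr' (h.mono fun γ hγ => (Set.indicator_of_notMem hγ 1).symm)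

theorem c0Ind_norm_le (s : Set Γ) (hs : s.Finite) : ‖c0Ind Γ s hs‖ ≤ 1 := by
  rw [← ZeroAtInftyContinuousMap.norm_toBCF_eq_norm]
  refine (BoundedContinuousFunction.norm_le zero_le_one).2 fun γ => ?_
  by_cases h : γ ∈ s <;> simp [c0Ind, Set.indicator_apply, h]

abbrev LinfC0 : Type := lp (fun _ : ℕ => C₀(Γ, ℝ)) ⊤

def IsPartialFun (σ : Set (ℕ × Γ)) : Prop :=
  ∀ ⦃n : ℕ⦄ ⦃β β' : Γ⦄, (n, β) ∈ σ → (n, β') ∈ σ → β = β'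

theorem fiber_finite {σ : Set (ℕ × Γ)} (hσ : IsPartialFun Γ σ) (n : ℕ) :
    {β : Γ | (n, β) ∈ σ}.Finite :=
  Set.Subsingleton.finite fun β hβ β' hβ' => hσ hβ hβ'

/-- `1_σ ∈ ℓ∞(c₀(Γ))`, the indicator of the graph of a partial function `σ`. -/
def oneGraph (σ : Set (ℕ × Γ)) (hσ : IsPartialFun Γ σ) : LinfC0 Γ :=
  ⟨fun n => c0Ind Γ {β : Γ | (n, β) ∈ σ} (fiber_finite Γ hσ n), by
    apply memℓp_infty
    refine ⟨1, ?_⟩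
    rintro - ⟨n, rfl⟩
    exact c0Ind_norm_le Γ _ _⟩

theorem isPartialFun_graph (σ : ℕ → Γ) : IsPartialFun Γ {p : ℕ × Γ | σ p.1 = p.2} := by
  rintro n β β' h h'
  simp only [Set.mem_setOf_eq] at h h'
  exact h.symm.trans h'

/-- `1_σ` for a total function `σ : ℕ → Γ`. -/
def oneFun (σ : ℕ → Γ) : LinfC0 Γ :=
  oneGraph Γ {p : ℕ × Γ | σ p.1 = p.2} (isPartialFun_graph Γ σ)

theorem isPartialFun_single (n : ℕ) (α : Γ) : IsPartialFun Γ {(n, α)} := by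
  rintro m β β' h h'
  simp only [Set.mem_singleton_iff, Prod.mk.injEq] at h h'
  exact h.2.trans h'.2.symm

/-- `1_{n,α}`, the indicator of `{(n,α)}`. -/
def onePt (n : ℕ) (α : Γ) : LinfC0 Γ :=
  oneGraph Γ {(n, α)} (isPartialFun_single Γ n α)

end c0

section Banach
variable (Y : Type) [NormedAddCommGroup Y] [NormedSpace ℝ Y]

abbrev LinfB : Type := lp (fun _ : ℕ => Y) ⊤

def c0NullB : Submodule ℝ (LinfB Y) where
  carrier := {x | Tendsto (fun n => x n) atTop (nhds (0 : Y))}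
  add_mem' := by
    intro x y hx hy
    simpa [lp.coeFn_add] using hx.add hy
  zero_mem' := by
    simpa [lp.coeFn_zero] using (tendsto_const_nhds : Tendsto (fun _ : ℕ => (0:Y)) atTop (nhds 0))
  smul_mem' := by
    intro c x hx
    have h := hx.const_smul c
    simpa [lp.coeFn_smul] using h

abbrev LinfModC0B : Type := LinfB Y ⧸ c0NullB Y

end Banach

/-! For `γ` in the large set `A` choose a norming functional `φ γ` of `T e_γ`. The rows
`β ↦ φ γ (T e_β)` lie in the ball of radius `‖T‖` of `ℓ¹(Γ)`, so Rosenthal's disjointification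
(if the rows kept mass `> ε/2` off the diagonal on every large subset, iterating a splitting
argument would give rows of unbounded mass) yields `G ⊆ A` with `#G = #Γ` on which every row has
off-diagonal mass at most `ε/2`. For finitely supported `f` on `G`, testing `T f` against `φ γ` at
a point `γ` where `|f|` is maximal gives `‖T f‖ ≥ (ε - ε/2) ‖f‖`; the general case follows by
density. -/

open Cardinal Function

section AlmostDisjoint

variable {Γ : Type*}

theorem exists_pairwiseDisjoint_subsets_mk_eq (S : Set Γ) (hS : ℵ₀ ≤ #S) :
    ∃ P : S → Set Γ, (∀ i, P i ⊆ S) ∧ (∀ i, #(P i) = #S) ∧ Pairwise (Disjoint on P) := by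
  obtain ⟨e⟩ : Nonempty (S ≃ S × S) := Cardinal.eq.mp (by rw [mk_prod, lift_id, mul_eq_self hS])
  refine ⟨fun i => Subtype.val '' (e ⁻¹' ({i} ×ˢ Set.univ)), fun i => Subtype.coe_image_subset S _,
    fun i => ?_, fun i j hij => ?_⟩
  · rw [mk_image_eq Subtype.val_injective, mk_preimage_equiv, singleton_prod,
      mk_image_eq (Prod.mk_right_injective i), mk_univ]
  · exact (disjoint_image_iff Subtype.val_injective).2
      ((disjoint_prod.2 (Or.inl (disjoint_singleton.2 hij))).preimage e)

def IsAlmostDisjoint (lam : Γ → Γ → ℝ) (ε : ℝ) (G : Set Γ) : Prop :=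
  ∀ γ ∈ G, ∀ F : Finset Γ, ↑F ⊆ G \ {γ} → ∑ β ∈ F, |lam γ β| ≤ ε

variable {lam : Γ → Γ → ℝ} {A : Set Γ} {ε : ℝ}

/-- Split `S` into `#S` pieces of size `#S`; a bad point of each piece carries mass `> ε` inside
its own piece, hence outside the set of chosen points. -/
theorem exists_mass_ge_of_forall_not_isAlmostDisjoint (hA : ℵ₀ ≤ #A)
    (hbad : ∀ G ⊆ A, #G = #A → ¬ IsAlmostDisjoint lam ε G) (n : ℕ) :
    ∃ S ⊆ A, #S = #A ∧
      ∀ γ ∈ S, ∃ B : Finset Γ, Disjoint (B : Set Γ) S ∧ n * ε ≤ ∑ β ∈ B, |lam γ β| := by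
  induction n with
  | zero => exact ⟨A, subset_rfl, rfl, fun _ _ => ⟨∅, by simp⟩⟩
  | succ n ih =>
    classical
    obtain ⟨S, hSA, hScard, hmass⟩ := ih
    obtain ⟨P, hPS, hPcard, hPdisj⟩ := exists_pairwiseDisjoint_subsets_mk_eq S (hScard ▸ hA)
    have hbadP : ∀ i, ∃ γ ∈ P i, ∃ F : Finset Γ, ↑F ⊆ P i \ {γ} ∧ ε < ∑ β ∈ F, |lam γ β| := by
      intro i
      have := hbad (P i) ((hPS i).trans hSA) ((hPcard i).trans hScard)
      simpa [IsAlmostDisjoint] using this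
    choose g hgP F hFP hF using hbadP
    have hg_inj : Injective g := fun i j hij => by_contra fun hne =>
      disjoint_left.1 (hPdisj hne) (hgP i) (hij ▸ hgP j)
    have hgS : range g ⊆ S := range_subset_iff.2 fun i => hPS i (hgP i)
    refine ⟨range g, hgS.trans hSA, (mk_range_eq g hg_inj).trans hScard, ?_⟩
    rintro _ ⟨i, rfl⟩
    obtain ⟨B, hBS, hB⟩ := hmass (g i) (hgS (mem_range_self i))
    have hBF : Disjoint B (F i) := Finset.disjoint_coe.1 <|
      hBS.mono_right ((hFP i).trans (sdiff_subset.trans (hPS i)))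
    refine ⟨B ∪ F i, ?_, ?_⟩
    · rw [Finset.coe_union, disjoint_union_left]
      refine ⟨hBS.mono_right hgS, disjoint_left.2 ?_⟩
      rintro γ hγ ⟨j, rfl⟩
      obtain ⟨hγi, hγg⟩ := hFP i hγ
      obtain rfl : j = i := by_contra fun hji => disjoint_left.1 (hPdisj hji) (hgP j) hγi
      exact hγg rfl
    · rw [Finset.sum_union hBF]
      push_cast
      linarith [hF i]

theorem exists_isAlmostDisjoint_subset (hA : ℵ₀ ≤ #A) {M : ℝ}
    (hM : ∀ γ ∈ A, ∀ F : Finset Γ, ∑ β ∈ F, |lam γ β| ≤ M) (hε : 0 < ε) :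
    ∃ G ⊆ A, #G = #A ∧ IsAlmostDisjoint lam ε G := by
  by_contra! hbad
  obtain ⟨n, hn⟩ := exists_nat_gt (M / ε)
  obtain ⟨S, hSA, hScard, hmass⟩ :=
    exists_mass_ge_of_forall_not_isAlmostDisjoint hA (fun G hGA hG => hbad G hGA hG) n
  obtain ⟨γ, hγ⟩ : S.Nonempty :=
    nonempty_iff_ne_empty.2 (mk_set_eq_zero_iff.not.1 (hScard ▸ (aleph0_pos.trans_le hA).ne'))
  obtain ⟨B, -, hB⟩ := hmass γ hγ
  have := hM γ (hSA hγ) B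
  rw [div_lt_iff₀ hε] at hn
  linarith

end AlmostDisjoint

section DiagonallyDominant

variable {ι X : Type*} [NormedAddCommGroup X] [NormedSpace ℝ X]

/-- Against `φ`, the term of the largest coefficient `c i` contributes at least `|c i| * a`, all
the others together at most `|c i| * b`. -/
theorem abs_mul_sub_le_norm_sum_smul [DecidableEq ι] (x : ι → X) {φ : StrongDual ℝ X}
    (hφ : ‖φ‖ ≤ 1) {F : Finset ι} (c : ι → ℝ) {i : ι} (hi : i ∈ F)
    (hmax : ∀ j ∈ F, |c j| ≤ |c i|) {a b : ℝ}
    (ha : a ≤ φ (x i)) (hb : ∑ j ∈ F.erase i, |φ (x j)| ≤ b) :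
    |c i| * (a - b) ≤ ‖∑ j ∈ F, c j • x j‖ := by
  have hsplit : φ (∑ j ∈ F, c j • x j) = c i * φ (x i) + ∑ j ∈ F.erase i, c j * φ (x j) := by
    simp only [map_sum, map_smul, smul_eq_mul, Finset.add_sum_erase F (fun j => c j * φ (x j)) hi]
  have hdiag : |c i| * a ≤ |c i * φ (x i)| := by
    rw [abs_mul]
    exact mul_le_mul_of_nonneg_left (ha.trans (le_abs_self _)) (abs_nonneg _)
  have hrest : |∑ j ∈ F.erase i, c j * φ (x j)| ≤ |c i| * b := calc
    _ ≤ ∑ j ∈ F.erase i, |c j| * |φ (x j)| := by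
      simpa only [abs_mul] using Finset.abs_sum_le_sum_abs (fun j => c j * φ (x j)) _
    _ ≤ ∑ j ∈ F.erase i, |c i| * |φ (x j)| := Finset.sum_le_sum fun j hj =>
      mul_le_mul_of_nonneg_right (hmax j (Finset.mem_of_mem_erase hj)) (abs_nonneg _)
    _ ≤ |c i| * b := by rw [← Finset.mul_sum]; exact mul_le_mul_of_nonneg_left hb (abs_nonneg _)
  have hφle : |φ (∑ j ∈ F, c j • x j)| ≤ ‖∑ j ∈ F, c j • x j‖ := by
    simpa using φ.le_of_opNorm_le hφ (∑ j ∈ F, c j • x j)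
  have := abs_sub_abs_le_abs_add (c i * φ (x i)) (∑ j ∈ F.erase i, c j * φ (x j))
  rw [← hsplit] at this
  linarith

end DiagonallyDominant

section C0

theorem ZeroAtInftyContinuousMap.sum_apply {α β ι : Type*} [TopologicalSpace α]
    [TopologicalSpace β] [AddCommMonoid β] [ContinuousAdd β] (F : Finset ι) (f : ι → C₀(α, β))
    (x : α) : (∑ i ∈ F, f i) x = ∑ i ∈ F, f i x :=
  map_sum ({ toFun := fun f => f x, map_zero' := rfl, map_add' := fun _ _ => rfl } :
    C₀(α, β) →+ β) f F

theorem ZeroAtInftyContinuousMap.norm_le_of_forall_abs_le {α : Type*} [TopologicalSpace α]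
    (f : C₀(α, ℝ)) {C : ℝ} (hC : 0 ≤ C) (h : ∀ x, |f x| ≤ C) : ‖f‖ ≤ C := by
  rw [← norm_toBCF_eq_norm]
  exact (BoundedContinuousFunction.norm_le hC).2 h

variable {Γ : Type} [TopologicalSpace Γ] [DiscreteTopology Γ]

def unitVec (γ : Γ) : C₀(Γ, ℝ) := c0Ind Γ {γ} (finite_singleton γ)

theorem sum_smul_unitVec_apply (F : Finset Γ) (c : Γ → ℝ) (γ : Γ) :
    (∑ β ∈ F, c β • unitVec β) γ = (F : Set Γ).indicator c γ := by
  classical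
  rw [ZeroAtInftyContinuousMap.sum_apply, indicator_apply]
  simp [unitVec, c0Ind, Pi.single_apply]

theorem norm_sum_smul_unitVec_le {F : Finset Γ} (c : Γ → ℝ) {C : ℝ} (hC : 0 ≤ C)
    (h : ∀ β ∈ F, |c β| ≤ C) : ‖∑ β ∈ F, c β • unitVec β‖ ≤ C := by
  refine ZeroAtInftyContinuousMap.norm_le_of_forall_abs_le _ hC fun γ => ?_
  rw [sum_smul_unitVec_apply]
  by_cases hγ : γ ∈ F
  · simpa [hγ] using h γ hγ
  · simpa [hγ] using hC

/-- Test `ψ` against the signs of its coefficients. -/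
theorem sum_abs_apply_unitVec_le (ψ : StrongDual ℝ C₀(Γ, ℝ)) (F : Finset Γ) :
    ∑ β ∈ F, |ψ (unitVec β)| ≤ ‖ψ‖ := by
  set s : Γ → ℝ := fun β => SignType.sign (ψ (unitVec β))
  have hs : ‖∑ β ∈ F, s β • unitVec β‖ ≤ 1 :=
    norm_sum_smul_unitVec_le s zero_le_one fun β _ => by
      simp only [s]
      generalize SignType.sign (ψ (unitVec β)) = t
      cases t <;> norm_num
  calc ∑ β ∈ F, |ψ (unitVec β)| = ψ (∑ β ∈ F, s β • unitVec β) := by simp [s]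
    _ ≤ ‖ψ‖ * ‖∑ β ∈ F, s β • unitVec β‖ := (le_abs_self _).trans (ψ.le_opNorm _)
    _ ≤ ‖ψ‖ := mul_le_of_le_one_right (norm_nonneg ψ) hs

theorem exists_finset_norm_sub_sum_smul_unitVec_le (f : C₀(Γ, ℝ)) {η : ℝ} (hη : 0 < η) :
    ∃ F : Finset Γ, (∀ γ ∈ F, f γ ≠ 0) ∧ ‖f - ∑ β ∈ F, f β • unitVec β‖ ≤ η := by
  have hfin : {γ | η ≤ |f γ|}.Finite := by
    have := NormedAddGroup.tendsto_nhds_zero.1 (cocompact_eq_cofinite Γ ▸ f.zero_at_infty') η hη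
    simpa using this
  refine ⟨hfin.toFinset, fun γ hγ hf0 => ?_, ?_⟩
  · simp only [Finite.mem_toFinset, mem_ofPred_eq, hf0, abs_zero] at hγ
    linarith
  refine ZeroAtInftyContinuousMap.norm_le_of_forall_abs_le _ hη.le fun γ => ?_
  rw [ZeroAtInftyContinuousMap.sub_apply, sum_smul_unitVec_apply]
  by_cases hγ : η ≤ |f γ|
  · simp [hγ, hη.le]
  · simpa [hγ] using (not_le.1 hγ).le

variable {X : Type*} [NormedAddCommGroup X] [NormedSpace ℝ X]

theorem mul_norm_le_of_forall_sum_smul_unitVec (T : C₀(Γ, ℝ) →L[ℝ] X) {δ : ℝ} {G : Set Γ}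
    (h : ∀ F : Finset Γ, ↑F ⊆ G → ∀ c : Γ → ℝ,
      δ * ‖∑ β ∈ F, c β • unitVec β‖ ≤ ‖T (∑ β ∈ F, c β • unitVec β)‖)
    (f : C₀(Γ, ℝ)) (hf : ∀ γ ∉ G, f γ = 0) : δ * ‖f‖ ≤ ‖T f‖ := by
  have hclosed : IsClosed {g : C₀(Γ, ℝ) | δ * ‖g‖ ≤ ‖T g‖} :=
    isClosed_le (by fun_prop) (by fun_prop)
  refine hclosed.closure_subset (Metric.mem_closure_iff.2 fun η hη => ?_)
  obtain ⟨F, hFf, hF⟩ := exists_finset_norm_sub_sum_smul_unitVec_le f (half_pos hη)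
  refine ⟨_, h F (fun γ hγ => by_contra fun hγG => hFf γ hγ (hf γ hγG)) f, ?_⟩
  rw [dist_eq_norm]
  linarith

theorem mul_norm_sum_smul_unitVec_le (T : C₀(Γ, ℝ) →L[ℝ] X) {φ : Γ → StrongDual ℝ X}
    (hφ : ∀ γ, ‖φ γ‖ ≤ 1) {G : Set Γ} {a b : ℝ} (hab : b ≤ a)
    (hdiag : ∀ γ ∈ G, a ≤ φ γ (T (unitVec γ)))
    (hG : IsAlmostDisjoint (fun γ β => φ γ (T (unitVec β))) b G)
    (F : Finset Γ) (hFG : ↑F ⊆ G) (c : Γ → ℝ) :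
    (a - b) * ‖∑ β ∈ F, c β • unitVec β‖ ≤ ‖T (∑ β ∈ F, c β • unitVec β)‖ := by
  classical
  rcases F.eq_empty_or_nonempty with rfl | hF
  · simp
  obtain ⟨γ, hγF, hmax⟩ := F.exists_max_image (fun β => |c β|) hF
  have hγG : γ ∈ G := hFG hγF
  have hoff : ↑(F.erase γ) ⊆ G \ {γ} := fun β hβ => by
    simp only [Finset.coe_erase, Set.mem_sdiff, mem_singleton_iff] at hβ ⊢
    exact ⟨hFG hβ.1, hβ.2⟩
  calc (a - b) * ‖∑ β ∈ F, c β • unitVec β‖ ≤ |c γ| * (a - b) := by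
        rw [mul_comm]
        exact mul_le_mul_of_nonneg_right (norm_sum_smul_unitVec_le c (abs_nonneg _) hmax)
          (sub_nonneg.2 hab)
    _ ≤ ‖∑ β ∈ F, c β • T (unitVec β)‖ :=
        abs_mul_sub_le_norm_sum_smul _ (hφ γ) c hγF hmax (hdiag γ hγG) (hG γ hγG _ hoff)
    _ = ‖T (∑ β ∈ F, c β • unitVec β)‖ := by simp only [map_sum, map_smul]

end C0

theorem statement4_general (Γ : Type) [TopologicalSpace Γ] [DiscreteTopology Γ] [Infinite Γ]
    (X : Type) [NormedAddCommGroup X] [NormedSpace ℝ X]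
    (T : C₀(Γ, ℝ) →L[ℝ] X) (ε : ℝ) (hε : 0 < ε)
    (hcard : Cardinal.mk {γ : Γ | ‖T (c0Ind Γ {γ} (Set.finite_singleton γ))‖ > ε} =
      Cardinal.mk Γ) :
    ∃ Γ' : Set Γ, Cardinal.mk Γ' = Cardinal.mk Γ ∧
      ∃ δ > (0 : ℝ), ∀ f : C₀(Γ, ℝ), (∀ γ ∉ Γ', f γ = 0) → δ * ‖f‖ ≤ ‖T f‖ := by
  set A := {γ : Γ | ε < ‖T (unitVec γ)‖}
  have hA : #A = #Γ := hcard
  choose φ hφ hφT using fun γ => exists_dual_vector'' ℝ (T (unitVec γ))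
  have hmass : ∀ γ ∈ A, ∀ F : Finset Γ, ∑ β ∈ F, |φ γ (T (unitVec β))| ≤ ‖T‖ := fun γ _ F =>
    calc _ ≤ ‖(φ γ).comp T‖ := sum_abs_apply_unitVec_le ((φ γ).comp T) F
      _ ≤ ‖φ γ‖ * ‖T‖ := (φ γ).opNorm_comp_le T
      _ ≤ ‖T‖ := mul_le_of_le_one_left (norm_nonneg T) (hφ γ)
  obtain ⟨G, hGA, hGcard, hG⟩ :=
    exists_isAlmostDisjoint_subset (hA ▸ aleph0_le_mk Γ) hmass (half_pos hε)
  have hdiag : ∀ γ ∈ G, ε ≤ φ γ (T (unitVec γ)) := fun γ hγ => by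
    rw [hφT]
    exact (hGA hγ).le
  refine ⟨G, hGcard.trans hA, ε / 2, half_pos hε,
    mul_norm_le_of_forall_sum_smul_unitVec T fun F hFG c => ?_⟩
  have := mul_norm_sum_smul_unitVec_le T hφ (half_le_self hε.le) hdiag hG F hFG c
  rwa [sub_half] at this

/-- Rosenthal's lemma: if `T : c₀(Γ) → X` is a bounded operator and
`{γ : ‖T eγ‖ > ε}` has cardinality `|Γ|` for some `ε > 0`, then there is `Γ' ⊆ Γ` of
full cardinality on which `T` is an isomorphism onto its image (bounded below). -/
theorem statement4 (Γ : Type) [TopologicalSpace Γ] [DiscreteTopology Γ] [Infinite Γ]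
    (X : Type) [NormedAddCommGroup X] [NormedSpace ℝ X] [CompleteSpace X]
    (T : C₀(Γ, ℝ) →L[ℝ] X) (ε : ℝ) (hε : 0 < ε)
    (hcard : Cardinal.mk {γ : Γ | ‖T (c0Ind Γ {γ} (Set.finite_singleton γ))‖ > ε} =
      Cardinal.mk Γ) :
    ∃ Γ' : Set Γ, Cardinal.mk Γ' = Cardinal.mk Γ ∧
      ∃ δ > (0 : ℝ), ∀ f : C₀(Γ, ℝ), (∀ γ ∉ Γ', f γ = 0) → δ * ‖f‖ ≤ ‖T f‖ :=
  statement4_general Γ X T ε hε hcard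
end
end

section
/- Let λ be an uncountable cardinal and suppose (σ_ξ)_{ξ<ω₁} are pairwise disjoint partial functions from ℕ to λ (viewed as sets of pairs), (r_ξ)_{ξ<ω₁} are nonzero reals, and T : ℓ∞(c₀(λ)) → ℓ∞/c₀ a bounded operator with T(1_{σ_ξ}) constantly equal to r_ξ on some clopen set [F_ξ]* where F_η ⊆* F_ξ for ξ < η. Then |r_ξ| cannot be bounded away from 0 on an infinite set with constant sign; i.e., for every ε > 0, at most finitely many ξ satisfy r_ξ ≥ ε, and at most finitely many satisfy r_ξ ≤ −ε. -/
open Filter Set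
open scoped ZeroAtInfty

noncomputable section

open Topology

/-!
For a finite set `t` of indices, every `F ξ` with `ξ ∈ t` almost contains `F (max t)`, so
`T (∑ ξ ∈ t, 1_{σ ξ})` is constantly `∑ ξ ∈ t, r ξ` on `[F (max t)]*`. As the `σ ξ` are disjoint,
`∑ ξ ∈ t, 1_{σ ξ}` has norm at most `1`, whence `|∑ ξ ∈ t, r ξ| ≤ ‖T‖` for every finite `t`; this
rules out infinitely many `r ξ ≥ ε`, or infinitely many `r ξ ≤ -ε`.
-/

theorem Set.Finite.atTop_inf_principal_le {E E' : Set ℕ} (h : (E' \ E).Finite) :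
    atTop ⊓ 𝓟 E' ≤ atTop ⊓ 𝓟 E := by
  rw [← Nat.cofinite_eq_atTop, ← h.cofinite_inf_principal_sdiff, sdiff_sdiff_right_self]
  exact inf_le_inf_left _ (principal_mono.2 inter_subset_right)

theorem Set.Infinite.atTop_inf_principal_neBot {E : Set ℕ} (hE : E.Infinite) :
    (atTop ⊓ 𝓟 E).NeBot := by
  rw [← Nat.cofinite_eq_atTop]
  exact hE.cofinite_inf_principal_neBot

theorem lp.norm_le_norm_of_tendsto {ι E : Type*} [NormedAddCommGroup E] {l : Filter ι} [l.NeBot]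
    {x : lp (fun _ : ι => E) ⊤} {a : E} (hx : Tendsto (fun i => x i) l (𝓝 a)) : ‖a‖ ≤ ‖x‖ :=
  le_of_tendsto hx.norm (Eventually.of_forall (lp.norm_apply_le_norm ENNReal.top_ne_zero x))

namespace ConstOnStar

theorem mono {E E' : Set ℕ} {r : ℝ} {y : LinfModC0} (h : ConstOnStar E r y)
    (hE : (E' \ E).Finite) : ConstOnStar E' r y :=
  let ⟨x, hxy, hx⟩ := h
  ⟨x, hxy, hx.mono_left hE.atTop_inf_principal_le⟩

theorem zero (E : Set ℕ) : ConstOnStar E 0 0 :=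
  ⟨0, rfl, tendsto_const_nhds⟩

theorem add {E : Set ℕ} {r r' : ℝ} {y y' : LinfModC0} (h : ConstOnStar E r y)
    (h' : ConstOnStar E r' y') : ConstOnStar E (r + r') (y + y') :=
  let ⟨x, hxy, hx⟩ := h
  let ⟨x', hxy', hx'⟩ := h'
  ⟨x + x', by rw [Submodule.Quotient.mk_add, hxy, hxy'], hx.add hx'⟩

theorem sum {ι : Type*} {E : Set ℕ} {t : Finset ι} {r : ι → ℝ} {y : ι → LinfModC0}
    (h : ∀ i ∈ t, ConstOnStar E (r i) (y i)) :
    ConstOnStar E (∑ i ∈ t, r i) (∑ i ∈ t, y i) := by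
  induction t using Finset.cons_induction with
  | empty => exact zero E
  | cons i t hi ih =>
    rw [Finset.forall_mem_cons] at h
    rw [Finset.sum_cons, Finset.sum_cons]
    exact h.1.add (ih h.2)

theorem abs_le_norm {E : Set ℕ} {r : ℝ} {y : LinfModC0} (h : ConstOnStar E r y)
    (hE : E.Infinite) : |r| ≤ ‖y‖ := by
  obtain ⟨x, rfl, hx⟩ := h
  have := hE.atTop_inf_principal_neBot
  rw [← Real.norm_eq_abs]
  refine QuotientAddGroup.le_norm_iff.2 fun x' hx' => ?_
  have hnull : Tendsto (fun n => (x' - x) n) (atTop ⊓ 𝓟 E) (𝓝 0) :=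
    ((Submodule.Quotient.eq c0Null).1 hx').mono_left inf_le_left
  exact lp.norm_le_norm_of_tendsto (l := atTop ⊓ 𝓟 E) (by simpa using hnull.add hx)

end ConstOnStar

section oneGraph

variable {Λ : Type} [TopologicalSpace Λ] [DiscreteTopology Λ] {I : Type}
  (σ : I → Set (ℕ × Λ)) (hpf : ∀ ξ, IsPartialFun Λ (σ ξ))

theorem sum_oneGraph_apply (t : Finset I) (n : ℕ) (β : Λ) :
    (∑ ξ ∈ t, oneGraph Λ (σ ξ) (hpf ξ)) n β = ∑ ξ ∈ t, {β | (n, β) ∈ σ ξ}.indicator 1 β := by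
  rw [lp.coeFn_sum, Finset.sum_apply]
  induction t using Finset.cons_induction with
  | empty => rfl
  | cons ξ t hξ ih => rw [Finset.sum_cons, Finset.sum_cons, ← ih]; rfl

theorem norm_sum_oneGraph_le_one (hdis : Pairwise fun ξ η => Disjoint (σ ξ) (σ η))
    (t : Finset I) : ‖∑ ξ ∈ t, oneGraph Λ (σ ξ) (hpf ξ)‖ ≤ 1 := by
  refine lp.norm_le_of_forall_le zero_le_one fun n => ?_
  rw [← ZeroAtInftyContinuousMap.norm_toBCF_eq_norm]
  refine (BoundedContinuousFunction.norm_le zero_le_one).2 fun β => ?_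
  have hdis' : (t : Set I).PairwiseDisjoint fun ξ => {β | (n, β) ∈ σ ξ} :=
    fun ξ _ η _ hne => Set.disjoint_left.2 fun β hξ hη => Set.disjoint_left.1 (hdis hne) hξ hη
  change ‖(∑ ξ ∈ t, oneGraph Λ (σ ξ) (hpf ξ)) n β‖ ≤ 1
  rw [sum_oneGraph_apply, ← Finset.indicator_biUnion_apply t _ hdis']
  exact (norm_indicator_le_norm_self _ _).trans norm_one.le

theorem abs_sum_le_opNorm [LinearOrder I] (hdis : Pairwise fun ξ η => Disjoint (σ ξ) (σ η))
    (r : I → ℝ) (T : LinfC0 Λ →L[ℝ] LinfModC0) (F : I → Set ℕ) (hFinf : ∀ ξ, (F ξ).Infinite)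
    (hchain : ∀ ξ η, ξ < η → (F η \ F ξ).Finite)
    (hconst : ∀ ξ, ConstOnStar (F ξ) (r ξ) (T (oneGraph Λ (σ ξ) (hpf ξ)))) (t : Finset I) :
    |∑ ξ ∈ t, r ξ| ≤ ‖T‖ := by
  rcases t.eq_empty_or_nonempty with rfl | ht
  · rw [Finset.sum_empty, abs_zero]
    exact norm_nonneg T
  have hsum : ConstOnStar (F (t.max' ht)) (∑ ξ ∈ t, r ξ)
      (T (∑ ξ ∈ t, oneGraph Λ (σ ξ) (hpf ξ))) := by
    rw [map_sum]
    refine ConstOnStar.sum fun ξ hξ => (hconst ξ).mono ?_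
    rcases (t.le_max' ξ hξ).lt_or_eq with hlt | heq
    · exact hchain _ _ hlt
    · simp [heq]
  calc |∑ ξ ∈ t, r ξ| ≤ ‖T (∑ ξ ∈ t, oneGraph Λ (σ ξ) (hpf ξ))‖ := hsum.abs_le_norm (hFinf _)
    _ ≤ ‖T‖ * ‖∑ ξ ∈ t, oneGraph Λ (σ ξ) (hpf ξ)‖ := T.le_opNorm _
    _ ≤ ‖T‖ := mul_le_of_le_one_right (norm_nonneg T) (norm_sum_oneGraph_le_one σ hpf hdis t)

end oneGraph

theorem finite_setOf_le_of_forall_sum_le {I : Type*} {r : I → ℝ} {C ε : ℝ} (hε : 0 < ε)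
    (h : ∀ t : Finset I, ∑ ξ ∈ t, r ξ ≤ C) : {ξ | ε ≤ r ξ}.Finite := by
  by_contra hinf
  obtain ⟨m, hm⟩ := exists_nat_gt (C / ε)
  obtain ⟨t, htS, rfl⟩ := Set.not_finite.1 hinf |>.exists_subset_card_eq m
  have : (t.card : ℝ) * ε ≤ ∑ ξ ∈ t, r ξ := by
    simpa using Finset.card_nsmul_le_sum t r ε fun ξ hξ => htS hξ
  rw [div_lt_iff₀ hε] at hm
  linarith [h t]

theorem statement7_general (Λ : Type) [TopologicalSpace Λ] [DiscreteTopology Λ]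
    (I : Type) [LinearOrder I]
    (σ : I → Set (ℕ × Λ)) (hpf : ∀ ξ, IsPartialFun Λ (σ ξ))
    (hdis : ∀ ξ η, ξ ≠ η → Disjoint (σ ξ) (σ η))
    (r : I → ℝ)
    (T : LinfC0 Λ →L[ℝ] LinfModC0)
    (F : I → Set ℕ) (hFinf : ∀ ξ, (F ξ).Infinite)
    (hchain : ∀ ξ η, ξ < η → (F η \ F ξ).Finite)
    (hconst : ∀ ξ, ConstOnStar (F ξ) (r ξ) (T (oneGraph Λ (σ ξ) (hpf ξ)))) :
    ∀ ε > (0 : ℝ), {ξ | r ξ ≥ ε}.Finite ∧ {ξ | r ξ ≤ -ε}.Finite := by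
  intro ε hε
  have hbound := abs_sum_le_opNorm σ hpf hdis r T F hFinf hchain hconst
  refine ⟨finite_setOf_le_of_forall_sum_le hε fun t => (le_abs_self _).trans (hbound t), ?_⟩
  refine (finite_setOf_le_of_forall_sum_le (r := fun ξ => -r ξ) (C := ‖T‖) hε fun t => ?_).subset
    fun ξ (hξ : r ξ ≤ -ε) => show ε ≤ -r ξ from le_neg_of_le_neg hξ
  rw [Finset.sum_neg_distrib]
  exact (neg_le_abs _).trans (hbound t)

/-- if `(σ ξ)_{ξ<ω₁}` are pairwise disjoint partial functions `ℕ → λ`,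
`(r ξ)` nonzero reals, `T : ℓ∞(c₀(λ)) → ℓ∞/c₀` bounded with `T(1_{σ ξ})` constantly
`r ξ` on `[F ξ]*` where `F η ⊆* F ξ` for `ξ < η`, then for every `ε > 0` only finitely
many `ξ` have `r ξ ≥ ε` and only finitely many have `r ξ ≤ -ε`. -/
theorem statement7 (Λ : Type) [TopologicalSpace Λ] [DiscreteTopology Λ] [Uncountable Λ]
    (I : Type) [LinearOrder I] (hI : Cardinal.mk I = Cardinal.aleph 1)
    (σ : I → Set (ℕ × Λ)) (hpf : ∀ ξ, IsPartialFun Λ (σ ξ))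
    (hdis : ∀ ξ η, ξ ≠ η → Disjoint (σ ξ) (σ η))
    (r : I → ℝ) (hr : ∀ ξ, r ξ ≠ 0)
    (T : LinfC0 Λ →L[ℝ] LinfModC0)
    (F : I → Set ℕ) (hFinf : ∀ ξ, (F ξ).Infinite)
    (hchain : ∀ ξ η, ξ < η → (F η \ F ξ).Finite)
    (hconst : ∀ ξ, ConstOnStar (F ξ) (r ξ) (T (oneGraph Λ (σ ξ) (hpf ξ)))) :
    ∀ ε > (0 : ℝ), {ξ | r ξ ≥ ε}.Finite ∧ {ξ | r ξ ≤ -ε}.Finite :=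
  statement7_general Λ I σ hpf hdis r T F hFinf hchain hconst
end
end
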